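/- arXiv:math/0703285 — 3 statements merged into one kernel-verified Lean document; each statement's English description precedes it below -/
import Mathlib

section
/- Let k ≥ 1 and let M be a symmetric k×k matrix over the two-element field 𝔽₂ which is a chain matrix, i.e. M i j = 1 whenever |i − j| = 1 and M i j = 0 whenever |i − j| ≥ 2 (the diagonal entries are arbitrary). Then the kernel of the linear map 𝔽₂^k → 𝔽₂^k, w ↦ M·w, has dimension at most 1. -/
/-- If `w` is in the kernel of a chain matrix and `w 0 = 0`, then `w = 0`. -/
lemma chainMatrix_ker_zero {k : ℕ} (hk : 1 ≤ k)
    (M : Matrix (Fin k) (Fin k) (ZMod 2))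
    (hsub : ∀ i j : Fin k, (i : ℕ) + 1 = (j : ℕ) ∨ (j : ℕ) + 1 = (i : ℕ) → M i j = 1)
    (hfar : ∀ i j : Fin k, (i : ℕ) + 2 ≤ (j : ℕ) ∨ (j : ℕ) + 2 ≤ (i : ℕ) → M i j = 0)
    (w : Fin k → ZMod 2) (hw : M.mulVec w = 0) (h0 : w ⟨0, hk⟩ = 0) :
    w = 0 := by
  have key : ∀ n : ℕ, ∀ i : Fin k, (i : ℕ) = n → w i = 0 := by
    intro n
    induction n using Nat.strong_induction_on with
    | _ n ih =>
      intro i hi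
      match n, hi with
      | 0, hi =>
        have : i = ⟨0, hk⟩ := by ext; simpa using hi
        rw [this]; exact h0
      | (m+1), hi =>
        have hm : m < k := by have := i.isLt; omega
        set p : Fin k := ⟨m, hm⟩ with hp
        have hrow : M.mulVec w p = 0 := by rw [hw]; rfl
        rw [Matrix.mulVec, dotProduct] at hrow
        have hsum : ∑ j, M p j * w j = M p i * w i := by
          apply Finset.sum_eq_single
          · intro j _ hji
            rcases lt_trichotomy (j : ℕ) (m+1) with hlt | heq | hgt
            · rw [ih j hlt j rfl, mul_zero]
            · exact absurd (Fin.ext (heq.trans hi.symm) : j = i) hji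
            · rw [hfar p j (Or.inl (by simp [hp]; omega)), zero_mul]
          · intro h; exact absurd (Finset.mem_univ i) h
        rw [hsum] at hrow
        rwa [hsub p i (Or.inl (by simp [hp, hi])), one_mul] at hrow
  funext i
  exact key i i rfl

/-- Let `k ≥ 1` and let `M` be a symmetric `k × k` matrix over the
two-element field `𝔽₂ = ZMod 2` which is a chain matrix: `M i j = 1` whenever `|i − j| = 1`
and `M i j = 0` whenever `|i − j| ≥ 2` (arbitrary diagonal entries).  Then the kernel of the
linear map `𝔽₂^k → 𝔽₂^k`, `w ↦ M·w`, has dimension at most `1`. -/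
theorem chainMatrix_ker_dim_le_one {k : ℕ} (hk : 1 ≤ k)
    (M : Matrix (Fin k) (Fin k) (ZMod 2)) (hsymm : M.IsSymm)
    (hsub : ∀ i j : Fin k, (i : ℕ) + 1 = (j : ℕ) ∨ (j : ℕ) + 1 = (i : ℕ) → M i j = 1)
    (hfar : ∀ i j : Fin k, (i : ℕ) + 2 ≤ (j : ℕ) ∨ (j : ℕ) + 2 ≤ (i : ℕ) → M i j = 0) :
    Module.finrank (ZMod 2) (LinearMap.ker M.mulVecLin) ≤ 1 := by
  let f : LinearMap.ker M.mulVecLin →ₗ[ZMod 2] ZMod 2 :=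
    (LinearMap.proj ⟨0, hk⟩).comp (Submodule.subtype _)
  have hf : Function.Injective f := by
    rw [← LinearMap.ker_eq_bot, LinearMap.ker_eq_bot']
    intro ⟨w, hw⟩ h0
    have hw' : M.mulVec w = 0 := hw
    have : w = 0 := chainMatrix_ker_zero hk M hsub hfar w hw' h0
    exact Subtype.ext this
  calc Module.finrank (ZMod 2) (LinearMap.ker M.mulVecLin)
      ≤ Module.finrank (ZMod 2) (ZMod 2) :=
        LinearMap.finrank_le_finrank_of_injective hf
    _ = 1 := Module.finrank_self _
end

section
/- Let M be a symmetric square matrix over the two-element field 𝔽₂, and let d be its diagonal vector, d i = M i i. Then d lies in the range of the linear map w ↦ M·w; in particular there always exists a vector w with M·w = d (a characteristic vector for M). -/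
/-!
For `v ∈ ker M`, symmetry kills the off-diagonal terms of `v ⬝ Mv` in characteristic two and
`v i ^ 2 = v i` over `𝔽₂`, so `0 = v ⬝ Mv = v ⬝ d`. Thus `d` is orthogonal to `ker M = ker Mᵀ`,
and by the Fredholm alternative it lies in the range of `M`.
-/

open Matrix

namespace Matrix

variable {m n K : Type*} [Fintype n]

theorem mem_range_mulVecLin_iff [Field K] [Fintype m] (A : Matrix m n K) (y : m → K) :
    y ∈ LinearMap.range A.mulVecLin ↔ ∀ v : m → K, v ᵥ* A = 0 → v ⬝ᵥ y = 0 := by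
  classical
  constructor
  · rintro ⟨x, rfl⟩ v hv
    rw [mulVecLin_apply, dotProduct_mulVec, hv, zero_dotProduct]
  · intro h
    rw [← Subspace.dualAnnihilator_dualCoannihilator_eq (W := LinearMap.range A.mulVecLin),
      Submodule.mem_dualCoannihilator]
    intro φ hφ
    obtain ⟨v, rfl⟩ := (dotProductEquiv K m).surjective φ
    refine h v (funext fun j => ?_)
    have hcol := (Submodule.mem_dualAnnihilator _).1 hφ _
      (LinearMap.mem_range_self _ (Pi.single j 1))
    simp only [dotProductEquiv_apply_apply, mulVecLin_apply, mulVec_single_one] at hcol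
    exact hcol

variable [CommRing K] [CharP K 2] {M : Matrix n n K}

theorem IsSymm.add_dotProduct_mulVec_add (hM : M.IsSymm) (u v : n → K) :
    (u + v) ⬝ᵥ M *ᵥ (u + v) = u ⬝ᵥ M *ᵥ u + v ⬝ᵥ M *ᵥ v := by
  have hcomm : u ⬝ᵥ M *ᵥ v = v ⬝ᵥ M *ᵥ u := by
    rw [dotProduct_mulVec, dotProduct_comm, ← vecMul_transpose, hM.eq]
  simp only [mulVec_add, add_dotProduct, dotProduct_add]
  linear_combination hcomm + CharTwo.add_self_eq_zero (v ⬝ᵥ M *ᵥ u)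

theorem IsSymm.dotProduct_mulVec_self (hM : M.IsSymm) (v : n → K) :
    v ⬝ᵥ M *ᵥ v = ∑ i, M i i * v i ^ 2 := by
  classical
  let Q : (n → K) →+ K :=
    { toFun w := w ⬝ᵥ M *ᵥ w
      map_zero' := by simp
      map_add' := hM.add_dotProduct_mulVec_add }
  calc v ⬝ᵥ M *ᵥ v = Q (∑ i, Pi.single i (v i)) := by rw [Finset.univ_sum_single]; rfl
    _ = ∑ i, M i i * v i ^ 2 := by
      rw [map_sum]
      refine Finset.sum_congr rfl fun i _ => ?_
      simp only [Q, AddMonoidHom.coe_mk, ZeroHom.coe_mk, mulVec_single, op_smul_eq_smul,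
        dotProduct_smul, single_dotProduct, col_apply, smul_eq_mul]
      ring

end Matrix

theorem exists_characteristic_vector_general {n : Type*} [Fintype n]
    (M : Matrix n n (ZMod 2)) (hsymm : M.IsSymm) :
    (fun i => M i i) ∈ LinearMap.range M.mulVecLin ∧
      ∃ w : n → ZMod 2, M.mulVec w = fun i => M i i := by
  have hdiag : (fun i => M i i) ∈ LinearMap.range M.mulVecLin := by
    rw [mem_range_mulVecLin_iff]
    intro v hv
    have hquad := hsymm.dotProduct_mulVec_self v
    rw [dotProduct_mulVec, hv, zero_dotProduct] at hquad
    simpa [dotProduct, ZMod.pow_card, mul_comm] using hquad.symm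
  obtain ⟨w, hw⟩ := hdiag
  exact ⟨⟨w, hw⟩, w, hw⟩

/-- Let `M` be a symmetric square matrix over the two-element field
`𝔽₂ = ZMod 2`, and let `d` be its diagonal vector, `d i = M i i`.  Then `d` lies in the range
of the linear map `w ↦ M·w`; in particular there always exists a vector `w` with `M·w = d`
(a characteristic vector for `M`). -/
theorem exists_characteristic_vector {n : Type*} [Fintype n] [DecidableEq n]
    (M : Matrix n n (ZMod 2)) (hsymm : M.IsSymm) :
    (fun i => M i i) ∈ LinearMap.range M.mulVecLin ∧
      ∃ w : n → ZMod 2, M.mulVec w = fun i => M i i :=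
  exists_characteristic_vector_general M hsymm
end

section
/- Let k ≥ 1 and let M be a symmetric k×k chain matrix over 𝔽₂ (M i j = 1 whenever |i − j| = 1 and M i j = 0 whenever |i − j| ≥ 2, arbitrary diagonal). If M is invertible, then there is exactly one characteristic vector w (i.e. vector with M·w equal to the diagonal vector of M). If M is not invertible, then there are exactly two characteristic vectors, and their sum is the unique nonzero element of the kernel of w ↦ M·w. -/
private lemma zmod2_mul_self (x : ZMod 2) : x * x = x := by revert x; decide
private lemma zmod2_add_self (x : ZMod 2) : x + x = 0 := by revert x; decide
private lemma zmod2_ne_zero {x : ZMod 2} (h : x ≠ 0) : x = 1 := by revert x; decide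
private lemma zmod2_add_eq_zero {x y : ZMod 2} (h : x + y = 0) : x = y := by
  revert h; revert x y; decide

/-- A kernel vector of a chain matrix vanishing in the first coordinate is zero. -/
private lemma chain_ker_zero {k : ℕ} (hk : 0 < k) (M : Matrix (Fin k) (Fin k) (ZMod 2))
    (hsub : ∀ i j : Fin k, (i : ℕ) + 1 = (j : ℕ) ∨ (j : ℕ) + 1 = (i : ℕ) → M i j = 1)
    (hfar : ∀ i j : Fin k, (i : ℕ) + 2 ≤ (j : ℕ) ∨ (j : ℕ) + 2 ≤ (i : ℕ) → M i j = 0)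
    (v : Fin k → ZMod 2) (hv : M.mulVec v = 0) (h0 : v ⟨0, hk⟩ = 0) : v = 0 := by
  have key : ∀ n, ∀ h : n < k, v ⟨n, h⟩ = 0 := by
    intro n
    induction n using Nat.strong_induction_on with
    | _ n ih =>
      match n with
      | 0 => intro h; exact h0
      | (m+1) =>
        intro h
        have hm : m < k := Nat.lt_of_succ_lt h
        have row := congrFun hv ⟨m, hm⟩
        simp only [Matrix.mulVec, dotProduct, Pi.zero_apply] at row
        have hsum : ∑ j, M ⟨m, hm⟩ j * v j = M ⟨m, hm⟩ ⟨m+1, h⟩ * v ⟨m+1, h⟩ := by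
          apply Finset.sum_eq_single
          · intro j _ hj
            rcases lt_or_ge (j : ℕ) (m+1) with hlt | hge
            · have hz := ih j.val hlt j.isLt
              rw [Fin.eta] at hz
              rw [hz, mul_zero]
            · have h2 : m + 2 ≤ (j : ℕ) := by
                rcases Nat.eq_or_lt_of_le hge with heq | hlt'
                · exact absurd (Fin.ext heq.symm : j = ⟨m+1, h⟩) hj
                · omega
              rw [hfar ⟨m, hm⟩ j (Or.inl h2), zero_mul]
          · intro habs; exact absurd (Finset.mem_univ _) habs
        have h1 : M ⟨m, hm⟩ ⟨m+1, h⟩ = 1 := hsub _ _ (Or.inl rfl)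
        rw [hsum, h1, one_mul] at row
        exact row
  funext i
  have := key i.val i.isLt
  rwa [Fin.eta] at this

/-- Quadratic form of a symmetric matrix over `ZMod 2` equals the diagonal pairing. -/
private lemma quad_diag {k : ℕ} (M : Matrix (Fin k) (Fin k) (ZMod 2)) (hsymm : M.IsSymm)
    (v : Fin k → ZMod 2) :
    dotProduct v (M.mulVec v) = ∑ i, M i i * v i := by
  have hMs : ∀ i j, M j i = M i j := fun i j => hsymm.apply i j
  have step1 : dotProduct v (M.mulVec v)
      = ∑ p : Fin k × Fin k, v p.1 * (M p.1 p.2 * v p.2) := by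
    simp only [Matrix.mulVec, dotProduct, Fintype.sum_prod_type]
    exact Finset.sum_congr rfl fun i _ => Finset.mul_sum _ _ _
  rw [step1]
  rw [← Finset.sum_filter_add_sum_filter_not Finset.univ
    (fun p : Fin k × Fin k => p.1 = p.2) (fun p => v p.1 * (M p.1 p.2 * v p.2))]
  have hoff : ∑ p ∈ Finset.univ.filter (fun p : Fin k × Fin k => ¬ p.1 = p.2),
      v p.1 * (M p.1 p.2 * v p.2) = 0 := by
    apply Finset.sum_involution (fun p _ => Prod.swap p)
    · intro p hp
      have : v p.swap.1 * (M p.swap.1 p.swap.2 * v p.swap.2)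
          = v p.1 * (M p.1 p.2 * v p.2) := by
        show v p.2 * (M p.2 p.1 * v p.1) = _
        rw [hMs p.1 p.2]; ring
      rw [this]; exact zmod2_add_self _
    · intro p hp _
      simp only [Finset.mem_filter, Finset.mem_univ, true_and] at hp
      intro heq
      exact hp (congrArg Prod.snd heq)
    · intro p hp
      simp only [Finset.mem_filter, Finset.mem_univ, true_and] at hp ⊢
      exact fun heq => hp heq.symm
    · intro p hp; rfl
  rw [hoff, add_zero]
  have hdiag : Finset.univ.filter (fun p : Fin k × Fin k => p.1 = p.2)
      = (Finset.univ : Finset (Fin k)).diag := by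
    ext p; simp [Finset.mem_diag, eq_comm]
  rw [hdiag, Finset.sum_diag]
  exact Finset.sum_congr rfl fun i _ => by
    rw [show v i * (M i i * v i) = M i i * (v i * v i) by ring, zmod2_mul_self]

/-- In the singular case the diagonal is still in the range. -/
private lemma exists_char {k : ℕ} (M : Matrix (Fin k) (Fin k) (ZMod 2)) (hsymm : M.IsSymm)
    (v₀ : Fin k → ZMod 2) (hv₀ne : v₀ ≠ 0) (hv₀ : M.mulVec v₀ = 0)
    (hker : ∀ v, M.mulVec v = 0 → v ≠ 0 → v = v₀) :
    ∃ w, M.mulVec w = fun i => M i i := by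
  classical
  let φ : (Fin k → ZMod 2) →ₗ[ZMod 2] ZMod 2 :=
    { toFun := fun x => dotProduct x v₀
      map_add' := fun x y => add_dotProduct x y v₀
      map_smul' := fun c x => smul_dotProduct c x v₀ }
  have hVrank : Module.finrank (ZMod 2) (Fin k → ZMod 2) = k := by
    simp [Module.finrank_pi]
  obtain ⟨i1, hi1⟩ : ∃ i, v₀ i ≠ 0 := by
    by_contra hcon; push_neg at hcon; exact hv₀ne (funext hcon)
  have hφsurj : Function.Surjective φ := by
    intro c
    refine ⟨c • Pi.single i1 1, ?_⟩
    have h1 : φ (Pi.single i1 1) = 1 := by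
      show dotProduct (Pi.single i1 1) v₀ = 1
      rw [dotProduct]
      rw [Finset.sum_eq_single i1]
      · rw [Pi.single_eq_same, one_mul]; exact zmod2_ne_zero hi1
      · intro j _ hj; rw [Pi.single_eq_of_ne hj, zero_mul]
      · intro habs; exact absurd (Finset.mem_univ _) habs
    rw [map_smul, h1, smul_eq_mul, mul_one]
  have hφker : Module.finrank (ZMod 2) (LinearMap.ker φ) = k - 1 := by
    have hrn := LinearMap.finrank_range_add_finrank_ker φ
    rw [LinearMap.range_eq_top.2 hφsurj, finrank_top, Module.finrank_self, hVrank] at hrn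
    omega
  have hkerf : LinearMap.ker M.mulVecLin = Submodule.span (ZMod 2) {v₀} := by
    apply le_antisymm
    · intro v hv
      rw [LinearMap.mem_ker, Matrix.mulVecLin_apply] at hv
      by_cases h0 : v = 0
      · rw [h0]; exact Submodule.zero_mem _
      · rw [hker v hv h0]; exact Submodule.mem_span_singleton_self _
    · rw [Submodule.span_le, Set.singleton_subset_iff]
      exact LinearMap.mem_ker.2 (by rw [Matrix.mulVecLin_apply]; exact hv₀)
  have hrange : Module.finrank (ZMod 2) (LinearMap.range M.mulVecLin) = k - 1 := by
    have hrn := LinearMap.finrank_range_add_finrank_ker M.mulVecLin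
    rw [hkerf, finrank_span_singleton hv₀ne, hVrank] at hrn
    omega
  have hle : LinearMap.range M.mulVecLin ≤ LinearMap.ker φ := by
    rintro x ⟨w, rfl⟩
    rw [LinearMap.mem_ker]
    show dotProduct (M.mulVec w) v₀ = 0
    rw [dotProduct_comm, Matrix.dotProduct_mulVec, ← Matrix.mulVec_transpose,
      hsymm.eq, hv₀, zero_dotProduct]
  have heq : LinearMap.range M.mulVecLin = LinearMap.ker φ :=
    Submodule.eq_of_le_of_finrank_eq hle (by rw [hrange, hφker])
  have hd : (fun i => M i i) ∈ LinearMap.ker φ := by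
    rw [LinearMap.mem_ker]
    show dotProduct (fun i => M i i) v₀ = 0
    have hq := quad_diag M hsymm v₀
    rw [hv₀, dotProduct_zero] at hq
    rw [dotProduct]
    exact hq.symm
  rw [← heq] at hd
  obtain ⟨w, hw⟩ := hd
  exact ⟨w, by rw [← Matrix.mulVecLin_apply]; exact hw⟩



/-- Let `k ≥ 1` and let `M` be a symmetric `k × k` chain matrix over
`𝔽₂ = ZMod 2` (`M i j = 1` whenever `|i − j| = 1`, `M i j = 0` whenever `|i − j| ≥ 2`,
arbitrary diagonal).  Call `w` characteristic if `M·w` equals the diagonal vector of `M`.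
If `M` is invertible then there is exactly one characteristic vector.  If `M` is not
invertible then there are exactly two characteristic vectors, and their sum is the unique
nonzero element of the kernel of `w ↦ M·w`. -/
theorem chainMatrix_characteristic_vectors {k : ℕ} (hk : 1 ≤ k)
    (M : Matrix (Fin k) (Fin k) (ZMod 2)) (hsymm : M.IsSymm)
    (hsub : ∀ i j : Fin k, (i : ℕ) + 1 = (j : ℕ) ∨ (j : ℕ) + 1 = (i : ℕ) → M i j = 1)
    (hfar : ∀ i j : Fin k, (i : ℕ) + 2 ≤ (j : ℕ) ∨ (j : ℕ) + 2 ≤ (i : ℕ) → M i j = 0) :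
    (IsUnit M → ∃! w : Fin k → ZMod 2, M.mulVec w = fun i => M i i) ∧
    (¬ IsUnit M →
      ∃ w₁ w₂ : Fin k → ZMod 2, w₁ ≠ w₂ ∧
        (M.mulVec w₁ = fun i => M i i) ∧
        (M.mulVec w₂ = fun i => M i i) ∧
        (∀ w : Fin k → ZMod 2, (M.mulVec w = fun i => M i i) → w = w₁ ∨ w = w₂) ∧
        w₁ + w₂ ≠ 0 ∧ M.mulVec (w₁ + w₂) = 0 ∧
        (∀ v : Fin k → ZMod 2, M.mulVec v = 0 → v ≠ 0 → v = w₁ + w₂)) := by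
  constructor
  · -- invertible case
    intro hU
    have hdet := (Matrix.isUnit_iff_isUnit_det M).1 hU
    refine ⟨M⁻¹.mulVec (fun i => M i i), ?_, ?_⟩
    · show M.mulVec _ = _
      rw [Matrix.mulVec_mulVec, Matrix.mul_nonsing_inv M hdet, Matrix.one_mulVec]
    · intro w hw
      have h2 := congrArg (M⁻¹.mulVec) hw
      rwa [Matrix.mulVec_mulVec, Matrix.nonsing_inv_mul M hdet, Matrix.one_mulVec] at h2
  · -- singular case
    intro hnu
    have hdet0 : M.det = 0 := by
      by_contra hcon
      exact hnu ((Matrix.isUnit_iff_isUnit_det M).2 (isUnit_iff_ne_zero.2 hcon))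
    obtain ⟨v₀, hv₀ne, hv₀⟩ := (Matrix.exists_mulVec_eq_zero_iff).2 hdet0
    have hk0 : 0 < k := hk
    -- any nonzero kernel vector equals v₀
    have hfirst : ∀ v : Fin k → ZMod 2, M.mulVec v = 0 → v ≠ 0 → v ⟨0, hk0⟩ = 1 := by
      intro v hv hne
      by_contra hcon
      rcases (show v ⟨0, hk0⟩ = 0 ∨ v ⟨0, hk0⟩ = 1 by
        revert hcon; generalize v ⟨0, hk0⟩ = x; revert x; decide) with h | h
      · exact hne (chain_ker_zero hk0 M hsub hfar v hv h)
      · exact hcon h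
    have hker : ∀ v : Fin k → ZMod 2, M.mulVec v = 0 → v ≠ 0 → v = v₀ := by
      intro v hv hne
      have hsum : M.mulVec (v + v₀) = 0 := by
        rw [Matrix.mulVec_add, hv, hv₀, add_zero]
      have hz : (v + v₀) ⟨0, hk0⟩ = 0 := by
        have h1 := hfirst v hv hne
        have h2 := hfirst v₀ hv₀ hv₀ne
        show v ⟨0, hk0⟩ + v₀ ⟨0, hk0⟩ = 0
        rw [h1, h2]; exact zmod2_add_self 1
      have := chain_ker_zero hk0 M hsub hfar (v + v₀) hsum hz
      funext i
      exact zmod2_add_eq_zero (congrFun this i)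
    obtain ⟨w₁, hw₁⟩ := exists_char M hsymm v₀ hv₀ne hv₀ hker
    refine ⟨w₁, w₁ + v₀, ?_, hw₁, ?_, ?_, ?_, ?_, ?_⟩
    · intro hcon
      apply hv₀ne
      funext i
      have h := congrFun hcon i
      simp only [Pi.add_apply, Pi.zero_apply] at h ⊢
      revert h; generalize w₁ i = a; generalize v₀ i = c; revert a c; decide
    · rw [Matrix.mulVec_add, hw₁, hv₀, add_zero]
    · intro w hw
      have hdiff : M.mulVec (w + w₁) = 0 := by
        rw [Matrix.mulVec_add, hw, hw₁]
        funext i; exact zmod2_add_self _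
      by_cases h0 : w + w₁ = 0
      · left
        funext i
        exact zmod2_add_eq_zero (congrFun h0 i)
      · right
        have hval := hker _ hdiff h0
        funext i
        have h := congrFun hval i
        simp only [Pi.add_apply] at h ⊢
        revert h
        generalize w i = a; generalize w₁ i = b; generalize v₀ i = c
        revert a b c; decide
    · intro hcon
      apply hv₀ne
      funext i
      have h := congrFun hcon i
      simp only [Pi.add_apply, Pi.zero_apply] at h ⊢
      revert h; generalize w₁ i = a; generalize v₀ i = c; revert a c; decide
    · have : w₁ + (w₁ + v₀) = v₀ := by
        funext i
        simp only [Pi.add_apply]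
        generalize w₁ i = a; generalize v₀ i = c; revert a c; decide
      rw [this, hv₀]
    · intro v hv hne
      have := hker v hv hne
      rw [this]
      funext i
      simp only [Pi.add_apply]
      generalize w₁ i = a; generalize v₀ i = c; revert a c; decide
end
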